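/- arXiv:1201.3884 — 2 statements merged into one kernel-verified Lean document; each statement's English description precedes it below -/
import Mathlib

section
/- For all integers n ≥ m ≥ 1, the number of ordered m-forests on {1,...,n} equals (2n-m-1)! · m / ((n-m)! · 2^(n-m)). -/
/-- Binary rooted trees with ℕ-labeled leaves. -/
inductive PTree : Type
  | leaf : ℕ → PTree
  | node : PTree → PTree → PTree

namespace PTree

/-- The set of leaf labels of a tree. -/
def leafSet : PTree → Finset ℕ
  | leaf x => {x}
  | node l r => leafSet l ∪ leafSet r

/-- A tree is a phylogenetic tree if at every internal node the leaf label sets of the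
two subtrees are disjoint (so leaves are bijectively labeled). -/
def isPhylo : PTree → Prop
  | leaf _ => True
  | node l r => isPhylo l ∧ isPhylo r ∧ Disjoint (leafSet l) (leafSet r)

/-- Canonical ordered representative of an isomorphism class of (unordered)
phylogenetic trees: at each internal node, the subtree containing the smallest
label comes first. -/
def canonical : PTree → Prop
  | leaf _ => True
  | node l r => canonical l ∧ canonical r ∧ (leafSet l).min < (leafSet r).min

/-- `t` represents an isomorphism class of phylogenetic trees on the taxon set `S`. -/
def isTreeOn (S : Finset ℕ) (t : PTree) : Prop :=
  isPhylo t ∧ canonical t ∧ leafSet t = S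

/-- The number of leaves of a tree. -/
def numLeaves : PTree → ℕ
  | leaf _ => 1
  | node l r => numLeaves l + numLeaves r

/-- The Colless index: sum over internal nodes of |κ(left child) − κ(right child)|. -/
def colless : PTree → ℕ
  | leaf _ => 0
  | node l r => colless l + colless r + ((numLeaves l : ℤ) - (numLeaves r : ℤ)).natAbs

/-- Product over internal nodes `v` of `1/(κ(v) − 1)`. -/
def yuleProd : PTree → ℚ
  | leaf _ => 1
  | node l r => (1 / ((numLeaves l + numLeaves r : ℕ) - 1 : ℚ)) * yuleProd l * yuleProd r

/-- The probability of a phylogenetic tree with `n` leaves under the Yule model: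
`2^(n-1)/n! · ∏_{v internal} 1/(κ(v)−1)`. -/
def yule (t : PTree) : ℚ :=
  2 ^ (numLeaves t - 1) / (Nat.factorial (numLeaves t) : ℚ) * yuleProd t

/-- The depth of the leaf labeled `x` in the tree (number of arcs from the root). -/
def depthOf (x : ℕ) : PTree → ℕ
  | leaf _ => 0
  | node l r => if x ∈ leafSet l then depthOf x l + 1 else depthOf x r + 1

/-- The Sackin index: sum of the depths of the leaves. -/
def sackin (t : PTree) : ℕ := ∑ x ∈ leafSet t, depthOf x t

/-- Sum over internal nodes `v` of the number of descendant leaves `κ(v)`. -/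
def kappaSum : PTree → ℕ
  | leaf _ => 0
  | node l r => kappaSum l + kappaSum r + (numLeaves l + numLeaves r)

/-- The number of (isomorphism classes of) phylogenetic trees on `{1,…,n}`
in which leaf `1` has depth `k`. -/
noncomputable def ckn (n k : ℕ) : ℕ :=
  Nat.card {t : PTree // isTreeOn (Finset.Icc 1 n) t ∧ depthOf 1 t = k}

end PTree

/-!
Let `F(S, m)` count ordered `m`-forests on `S` and let `x` exceed every element of `S`. Deleting `x`
from an `(m + 1)`-forest on `insert x S` either removes a one-leaf tree (leaving an `m`-forest and
one of `m + 1` positions) or detaches `x` from its sibling (leaving an `(m + 1)`-forest, a tree and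
one of the `2k - 1` nodes of that tree with `k` leaves; these number `2|S| - m - 1` in total). So
`F(insert x S, m + 1) = (2|S| - m - 1) F(S, m + 1) + (m + 1) F(S, m)`, and with `F({1,…,n}, n) = n!`
the closed form follows by induction on `n`.
-/

namespace Finset

variable {α : Type*} [LinearOrder α] {s : Finset α} {a : α}

lemma min_lt_of_forall_lt (hs : s.Nonempty) (h : ∀ b ∈ s, b < a) : s.min < a := by
  obtain ⟨b, hb⟩ := hs
  exact (min_le hb).trans_lt (WithTop.coe_lt_coe.2 (h b hb))

lemma min_insert_of_forall_lt (hs : s.Nonempty) (h : ∀ b ∈ s, b < a) :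
    (insert a s).min = s.min := by
  rw [min_insert]
  exact min_eq_right (min_lt_of_forall_lt hs h).le

end Finset

namespace PTree

open Finset
open scoped Nat

lemma leafSet_nonempty (t : PTree) : (leafSet t).Nonempty := by
  induction t with
  | leaf x => exact singleton_nonempty x
  | node l r ihl _ => exact ihl.mono subset_union_left

lemma card_leafSet {t : PTree} (ht : isPhylo t) : #(leafSet t) = numLeaves t := by
  induction t with
  | leaf x => rfl
  | node l r ihl ihr =>
    obtain ⟨hl, hr, hd⟩ := ht
    rw [leafSet, numLeaves, card_union_of_disjoint hd, ihl hl, ihr hr]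

lemma one_le_numLeaves (t : PTree) : 1 ≤ numLeaves t := by
  induction t with
  | leaf x => rfl
  | node l r ihl _ => exact ihl.trans (Nat.le_add_right _ _)

lemma finite_setOf_numLeaves_le (S : Finset ℕ) (n : ℕ) :
    {t | numLeaves t ≤ n ∧ leafSet t ⊆ S}.Finite := by
  induction n with
  | zero =>
    refine Set.finite_empty.subset fun t ⟨ht, _⟩ => ?_
    exact absurd ht (Nat.not_le.2 (one_le_numLeaves t))
  | succ n ih =>
    refine ((S.finite_toSet.image leaf).union (ih.image2 node ih)).subset ?_
    rintro (x | ⟨l, r⟩) ⟨hn, hS⟩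
    · exact Or.inl ⟨x, hS (mem_singleton_self x), rfl⟩
    · have := one_le_numLeaves l
      have := one_le_numLeaves r
      simp only [numLeaves, leafSet, union_subset_iff] at hn hS
      exact Or.inr ⟨l, ⟨by omega, hS.1⟩, r, ⟨by omega, hS.2⟩, rfl⟩

lemma finite_setOf_isPhylo (S : Finset ℕ) : {t | isPhylo t ∧ leafSet t ⊆ S}.Finite :=
  (finite_setOf_numLeaves_le S #S).subset fun _ ⟨ht, hS⟩ =>
    ⟨card_leafSet ht ▸ card_le_card hS, hS⟩

/-- The nodes of a tree, as paths from the root (`false` = left, `true` = right). -/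
def nodes : PTree → Finset (List Bool)
  | leaf _ => {[]}
  | node l r => insert [] ((nodes l).map ⟨List.cons false, List.cons_injective⟩ ∪
      (nodes r).map ⟨List.cons true, List.cons_injective⟩)

lemma card_nodes (t : PTree) : #(nodes t) = 2 * numLeaves t - 1 := by
  induction t with
  | leaf x => rfl
  | node l r ihl ihr =>
    have hdisj : Disjoint ((nodes l).map ⟨List.cons false, List.cons_injective⟩)
        ((nodes r).map ⟨List.cons true, List.cons_injective⟩) := by
      simp [disjoint_left]
    rw [nodes, card_insert_of_notMem (by simp), card_union_of_disjoint hdisj, card_map, card_map,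
      ihl, ihr, numLeaves]
    have := one_le_numLeaves l
    have := one_le_numLeaves r
    omega

/-- Attach a new leaf `x` as the sibling of the subtree at path `p` (at the root if `p` leaves
the tree). -/
def graft (x : ℕ) : List Bool → PTree → PTree
  | false :: p, node l r => node (graft x p l) r
  | true :: p, node l r => node l (graft x p r)
  | _, t => node t (leaf x)

section Graft

variable {x : ℕ}

lemma graft_ne_leaf (p : List Bool) (t : PTree) (y : ℕ) : graft x p t ≠ leaf y := by
  unfold graft; split <;> simp

lemma leafSet_graft (p : List Bool) (t : PTree) :
    leafSet (graft x p t) = insert x (leafSet t) := by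
  fun_induction graft x p t with
  | case1 p l r ih => simp only [leafSet, ih, insert_union]
  | case2 p l r ih => simp only [leafSet, ih, union_insert]
  | case3 => exact union_comm _ _

lemma isPhylo_graft (p : List Bool) {t : PTree} (ht : isPhylo t) (hx : x ∉ leafSet t) :
    isPhylo (graft x p t) := by
  fun_induction graft x p t with
  | case1 p l r ih =>
    simp only [leafSet, mem_union, not_or] at hx
    exact ⟨ih ht.1 hx.1, ht.2.1, leafSet_graft p l ▸ disjoint_insert_left.2 ⟨hx.2, ht.2.2⟩⟩
  | case2 p l r ih =>
    simp only [leafSet, mem_union, not_or] at hx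
    exact ⟨ht.1, ih ht.2.1 hx.2, leafSet_graft p r ▸ disjoint_insert_right.2 ⟨hx.1, ht.2.2⟩⟩
  | case3 => exact ⟨ht, trivial, disjoint_singleton_right.2 hx⟩

lemma canonical_graft (p : List Bool) {t : PTree} (ht : canonical t)
    (hx : ∀ y ∈ leafSet t, y < x) : canonical (graft x p t) := by
  fun_induction graft x p t with
  | case1 p l r ih =>
    have hxl : ∀ y ∈ leafSet l, y < x := fun y hy => hx y (mem_union_left _ hy)
    refine ⟨ih ht.1 hxl, ht.2.1, ?_⟩
    rw [leafSet_graft, min_insert_of_forall_lt (leafSet_nonempty l) hxl]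
    exact ht.2.2
  | case2 p l r ih =>
    have hxr : ∀ y ∈ leafSet r, y < x := fun y hy => hx y (mem_union_right _ hy)
    refine ⟨ht.1, ih ht.2.1 hxr, ?_⟩
    rw [leafSet_graft, min_insert_of_forall_lt (leafSet_nonempty r) hxr]
    exact ht.2.2
  | case3 => exact ⟨ht, trivial, min_lt_of_forall_lt (leafSet_nonempty _) hx⟩

def ungraft (x : ℕ) : PTree → PTree × List Bool
  | leaf y => (leaf y, [])
  | node l r =>
    if leafSet r = {x} then (l, [])
    else if x ∈ leafSet l then (node (ungraft x l).1 r, false :: (ungraft x l).2)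
    else (node l (ungraft x r).1, true :: (ungraft x r).2)

lemma ungraft_graft {p : List Bool} {t : PTree} (hp : p ∈ nodes t) (hx : x ∉ leafSet t) :
    ungraft x (graft x p t) = (t, p) := by
  induction t generalizing p with
  | leaf y =>
    obtain rfl : p = [] := mem_singleton.1 hp
    simp [graft, ungraft, leafSet]
  | node l r ihl ihr =>
    simp only [leafSet, mem_union, not_or] at hx
    simp only [nodes, mem_insert, mem_union, mem_map, Function.Embedding.coeFn_mk] at hp
    rcases hp with rfl | ⟨q, hq, rfl⟩ | ⟨q, hq, rfl⟩
    · simp [graft, ungraft, leafSet]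
    · have hxq : x ∈ leafSet (graft x q l) := leafSet_graft q l ▸ mem_insert_self x _
      have hne : leafSet r ≠ {x} := fun h => hx.2 (h ▸ mem_singleton_self x)
      simp [graft, ungraft, ihl hq hx.1, hxq, hne]
    · have hne : leafSet (graft x q r) ≠ {x} := by
        rw [leafSet_graft]
        intro h
        obtain ⟨y, hy⟩ := leafSet_nonempty r
        have hyx : y = x := mem_singleton.1 (h ▸ mem_insert_of_mem hy)
        exact hx.2 (hyx ▸ hy)
      simp [graft, ungraft, ihr hq hx.2, hx.1, hne]

lemma nil_mem_nodes (t : PTree) : [] ∈ nodes t := by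
  cases t <;> simp [nodes]

lemma exists_graft_eq {T : PTree} (hT : isPhylo T) (hc : canonical T) (hx : x ∈ leafSet T)
    (hmax : ∀ y ∈ leafSet T, y ≤ x) (hne : T ≠ leaf x) :
    ∃ t, ∃ p ∈ nodes t, isPhylo t ∧ canonical t ∧ x ∉ leafSet t ∧ graft x p t = T := by
  induction T with
  | leaf y => exact absurd (congrArg leaf (mem_singleton.1 hx)).symm hne
  | node l r ihl ihr =>
    obtain ⟨hl, hr, hd⟩ := hT
    obtain ⟨cl, cr, hlr⟩ := hc
    have hmaxl : ∀ y ∈ leafSet l, y ≤ x := fun y hy => hmax y (mem_union_left _ hy)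
    have hmaxr : ∀ y ∈ leafSet r, y ≤ x := fun y hy => hmax y (mem_union_right _ hy)
    by_cases hrx : r = leaf x
    · subst hrx
      exact ⟨l, [], nil_mem_nodes l, hl, cl, disjoint_singleton_right.1 hd, rfl⟩
    rcases mem_union.1 hx with hxl | hxr
    · have hlx : l ≠ leaf x := by
        rintro rfl
        obtain ⟨y, hy⟩ := leafSet_nonempty r
        exact absurd (hlr.trans_le (min_le hy)) (not_lt.2 (WithTop.coe_le_coe.2 (hmaxr y hy)))
      obtain ⟨t, p, hp, ht, htc, hxt, rfl⟩ := ihl hl cl hxl hmaxl hlx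
      rw [leafSet_graft] at hd hlr hmaxl
      have hlt : ∀ y ∈ leafSet t, y < x := fun y hy =>
        (hmaxl y (mem_insert_of_mem hy)).lt_of_ne fun h => hxt (h ▸ hy)
      refine ⟨node t r, false :: p, by simp [nodes, hp], ⟨ht, hr, (disjoint_insert_left.1 hd).2⟩,
        ⟨htc, cr, ?_⟩, ?_, rfl⟩
      · rwa [min_insert_of_forall_lt (leafSet_nonempty t) hlt] at hlr
      · simp [leafSet, hxt, (disjoint_insert_left.1 hd).1]
    · obtain ⟨t, p, hp, ht, htc, hxt, rfl⟩ := ihr hr cr hxr hmaxr hrx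
      rw [leafSet_graft] at hd hlr hmaxr
      have hlt : ∀ y ∈ leafSet t, y < x := fun y hy =>
        (hmaxr y (mem_insert_of_mem hy)).lt_of_ne fun h => hxt (h ▸ hy)
      refine ⟨node l t, true :: p, by simp [nodes, hp], ⟨hl, ht, (disjoint_insert_right.1 hd).2⟩,
        ⟨cl, htc, ?_⟩, ?_, rfl⟩
      · rwa [min_insert_of_forall_lt (leafSet_nonempty t) hlt] at hlr
      · simp [leafSet, hxt, (disjoint_insert_right.1 hd).1]

end Graft

def IsForest (S : Finset ℕ) {m : ℕ} (f : Fin m → PTree) : Prop :=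
  (∀ i, isPhylo (f i) ∧ canonical (f i)) ∧
  (∀ i j, i ≠ j → Disjoint (leafSet (f i)) (leafSet (f j))) ∧
  Finset.univ.biUnion (fun i => leafSet (f i)) = S

section Forest

variable {S : Finset ℕ} {m : ℕ} {f : Fin m → PTree} {x : ℕ}

lemma isForest_iff : IsForest S f ↔ (∀ i, isPhylo (f i) ∧ canonical (f i)) ∧
    (∀ y i j, y ∈ leafSet (f i) → y ∈ leafSet (f j) → i = j) ∧
    ∀ y, y ∈ S ↔ ∃ i, y ∈ leafSet (f i) := by
  simp only [IsForest, Finset.ext_iff, mem_biUnion, mem_univ, true_and, disjoint_left]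
  grind

lemma IsForest.leafSet_subset (hf : IsForest S f) (i : Fin m) : leafSet (f i) ⊆ S := by
  rw [← hf.2.2]
  exact subset_biUnion_of_mem (fun j => leafSet (f j)) (mem_univ i)

lemma IsForest.eq_of_mem (hf : IsForest S f) {y : ℕ} {i j : Fin m} (hi : y ∈ leafSet (f i))
    (hj : y ∈ leafSet (f j)) : i = j :=
  (isForest_iff.1 hf).2.1 y i j hi hj

lemma IsForest.exists_mem (hf : IsForest S f) {y : ℕ} (hy : y ∈ S) : ∃ i, y ∈ leafSet (f i) :=
  ((isForest_iff.1 hf).2.2 y).1 hy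

lemma IsForest.update_insert (hf : IsForest S f) (hxS : x ∉ S) {i : Fin m} {t : PTree}
    (ht : isPhylo t ∧ canonical t) (hti : leafSet t = insert x (leafSet (f i))) :
    IsForest (insert x S) (Function.update f i t) := by
  rw [isForest_iff] at hf ⊢
  obtain ⟨htree, huniq, hcover⟩ := hf
  refine ⟨fun j => ?_, fun y j k => ?_, fun y => ?_⟩
  · rcases eq_or_ne j i with rfl | h <;> simp_all
  · simp only [Function.update_apply]
    grind
  · simp only [Function.update_apply, mem_insert]
    grind

lemma IsForest.update_erase (hf : IsForest (insert x S) f) (hxS : x ∉ S) {i : Fin m} {t : PTree}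
    (ht : isPhylo t ∧ canonical t) (hti : insert x (leafSet t) = leafSet (f i))
    (hxt : x ∉ leafSet t) :
    IsForest S (Function.update f i t) := by
  rw [isForest_iff] at hf ⊢
  obtain ⟨htree, huniq, hcover⟩ := hf
  refine ⟨fun j => ?_, fun y j k => ?_, fun y => ?_⟩
  · rcases eq_or_ne j i with rfl | h <;> simp_all
  · simp only [Function.update_apply]
    grind
  · have := hcover y
    have := Finset.ext_iff.1 hti y
    simp only [Function.update_apply]
    grind

lemma IsForest.insertNth (hf : IsForest S f) (hxS : x ∉ S) (i : Fin (m + 1)) :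
    IsForest (insert x S) (Fin.insertNth i (leaf x) f) := by
  rw [isForest_iff] at hf ⊢
  obtain ⟨htree, huniq, hcover⟩ := hf
  refine ⟨Fin.forall_iff_succAbove i |>.2 ⟨by simp [isPhylo, canonical], by simpa using htree⟩,
    fun y => ?_, fun y => ?_⟩
  · simp only [Fin.forall_iff_succAbove i, Fin.insertNth_apply_same, Fin.insertNth_apply_succAbove,
      leafSet, mem_singleton, Fin.succAbove_ne, Fin.succAbove_right_inj]
    grind
  · simp only [Fin.exists_iff_succAbove i, Fin.insertNth_apply_same, Fin.insertNth_apply_succAbove,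
      leafSet, mem_singleton, mem_insert]
    grind

lemma IsForest.removeNth {f : Fin (m + 1) → PTree} (hf : IsForest (insert x S) f) (hxS : x ∉ S)
    {i : Fin (m + 1)} (hi : f i = leaf x) : IsForest S (Fin.removeNth i f) := by
  rw [isForest_iff] at hf ⊢
  obtain ⟨htree, huniq, hcover⟩ := hf
  refine ⟨fun j => htree _, fun y j k hj hk => Fin.succAbove_right_injective (huniq y _ _ hj hk),
    fun y => ?_⟩
  have hxi : x ∈ leafSet (f i) := hi ▸ mem_singleton_self x
  have := hcover y
  simp only [Fin.exists_iff_succAbove i, hi, leafSet, mem_singleton, mem_insert] at this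
  simp only [Fin.removeNth]
  grind [Fin.succAbove_ne]

lemma IsForest.sum_numLeaves (hf : IsForest S f) : ∑ i, numLeaves (f i) = #S := by
  rw [← hf.2.2, card_biUnion fun i _ j _ hij => hf.2.1 i j hij]
  exact sum_congr rfl fun i _ => (card_leafSet (hf.1 i).1).symm

lemma IsForest.sum_card_nodes (hf : IsForest S f) : ∑ i, #(nodes (f i)) = 2 * #S - m := by
  have h : ∑ i, #(nodes (f i)) + m = 2 * #S := by
    calc ∑ i, #(nodes (f i)) + m = ∑ i, (#(nodes (f i)) + 1) := by simp [sum_add_distrib]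
      _ = ∑ i, 2 * numLeaves (f i) :=
          sum_congr rfl fun i _ => by rw [card_nodes]; have := one_le_numLeaves (f i); omega
      _ = 2 * #S := by rw [← mul_sum, hf.sum_numLeaves]
  omega

lemma IsForest.le_card (hf : IsForest S f) : m ≤ #S := by
  calc m = ∑ _i : Fin m, 1 := by simp
    _ ≤ ∑ i, numLeaves (f i) := sum_le_sum fun i _ => one_le_numLeaves (f i)
    _ = #S := hf.sum_numLeaves

end Forest

abbrev Forest (S : Finset ℕ) (m : ℕ) : Type := {f : Fin m → PTree // IsForest S f}

instance (S : Finset ℕ) (m : ℕ) : Finite (Forest S m) := by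
  have := (finite_setOf_isPhylo S).to_subtype
  refine Finite.of_injective (β := Fin m → {t | isPhylo t ∧ leafSet t ⊆ S})
    (fun f i => ⟨f.1 i, (f.2.1 i).1, f.2.leafSet_subset i⟩) fun f g h => ?_
  ext1
  funext i
  exact congrArg Subtype.val (congrFun h i)

lemma card_forest_empty : Nat.card (Forest ∅ 0) = 1 := by
  have : Nonempty (Forest ∅ 0) := ⟨⟨Fin.elim0, by simp [IsForest]⟩⟩
  exact Nat.card_eq_one_iff_unique.2 ⟨inferInstance, this⟩

lemma card_forest_zero {S : Finset ℕ} (hS : S.Nonempty) : Nat.card (Forest S 0) = 0 := by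
  have : IsEmpty (Forest S 0) := ⟨fun f => hS.ne_empty (by simpa using f.2.2.2.symm)⟩
  exact Nat.card_of_isEmpty

lemma card_forest_of_card_lt {S : Finset ℕ} {m : ℕ} (hm : #S < m) : Nat.card (Forest S m) = 0 := by
  have : IsEmpty (Forest S m) := ⟨fun f => absurd f.2.le_card (not_le.2 hm)⟩
  exact Nat.card_of_isEmpty

lemma card_sigma_nodes (S : Finset ℕ) (m : ℕ) :
    Nat.card (Σ g : Forest S m, Σ i, ↥(nodes (g.1 i))) = Nat.card (Forest S m) * (2 * #S - m) := by
  have := Fintype.ofFinite (Forest S m)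
  simp only [Nat.card_sigma, Nat.card_eq_finsetCard]
  rw [sum_congr rfl fun g _ => g.2.sum_card_nodes, sum_const, card_univ, smul_eq_mul,
    Nat.card_eq_fintype_card]

section Insert

variable {S : Finset ℕ} {x m : ℕ} {f : Fin m → PTree}

lemma card_forest_with_leaf (hxS : x ∉ S) :
    Nat.card {f : Forest (insert x S) (m + 1) // ∃ i, f.1 i = leaf x} =
      (m + 1) * Nat.card (Forest S m) := by
  let Φ : Fin (m + 1) × Forest S m → {f : Forest (insert x S) (m + 1) // ∃ i, f.1 i = leaf x} :=
    fun p => ⟨⟨Fin.insertNth p.1 (leaf x) p.2.1, p.2.2.insertNth hxS p.1⟩, p.1, by simp⟩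
  have hΦ : Function.Bijective Φ := by
    constructor
    · rintro ⟨i, g⟩ ⟨j, h⟩ hgh
      have hxi : x ∈ leafSet ((Φ (j, h)).1.1 i) :=
        hgh ▸ (by simp [Φ, leafSet] : x ∈ leafSet ((Φ (i, g)).1.1 i))
      obtain rfl : i = j := (Φ (j, h)).1.2.eq_of_mem hxi (by simp [Φ, leafSet])
      have hval : Fin.insertNth (α := fun _ => PTree) i (leaf x) g.1 =
          Fin.insertNth i (leaf x) h.1 := congrArg (fun f => f.1.1) hgh
      obtain rfl : g = h := Subtype.ext (Fin.insertNth_injective2 hval).2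
      rfl
    · rintro ⟨⟨f, hf⟩, i, hi⟩
      refine ⟨(i, ⟨Fin.removeNth i f, hf.removeNth hxS hi⟩), ?_⟩
      ext1; ext1
      simp only [Φ, ← hi, Fin.insertNth_self_removeNth]
  rw [← Nat.card_eq_of_bijective Φ hΦ, Nat.card_prod, Nat.card_eq_fintype_card (α := Fin _),
    Fintype.card_fin]

lemma IsForest.update_graft {g : Fin m → PTree} (hg : IsForest S g) (hx : ∀ y ∈ S, y < x)
    (i : Fin m) (p : List Bool) :
    IsForest (insert x S) (Function.update g i (graft x p (g i))) ∧
      ¬∃ j, Function.update g i (graft x p (g i)) j = leaf x := by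
  have hxS : x ∉ S := fun hxS => lt_irrefl x (hx x hxS)
  have hxg (j : Fin m) : x ∉ leafSet (g j) := fun h => hxS (hg.leafSet_subset j h)
  refine ⟨hg.update_insert hxS ⟨isPhylo_graft p (hg.1 i).1 (hxg i), canonical_graft p (hg.1 i).2
    fun y hy => hx y (hg.leafSet_subset i hy)⟩ (leafSet_graft p (g i)), ?_⟩
  rintro ⟨j, hj⟩
  rcases eq_or_ne j i with rfl | hji
  · exact graft_ne_leaf _ _ _ (by simpa using hj)
  · have hgj : g j = leaf x := by simpa [Function.update_of_ne hji] using hj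
    exact hxg j (hgj ▸ mem_singleton_self x)

lemma IsForest.eq_of_update_graft_eq {g h : Fin m → PTree} (hg : IsForest S g)
    (hh : IsForest S h) (hx : ∀ y ∈ S, y < x) {i j : Fin m} {p q : List Bool}
    (hp : p ∈ nodes (g i)) (hq : q ∈ nodes (h j))
    (hgh : Function.update g i (graft x p (g i)) = Function.update h j (graft x q (h j))) :
    i = j ∧ g = h ∧ p = q := by
  have hxS : x ∉ S := fun hxS => lt_irrefl x (hx x hxS)
  have hmem {k : Fin m → PTree} (i : Fin m) (p : List Bool) :
      x ∈ leafSet (Function.update k i (graft x p (k i)) i) := by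
    simp [leafSet_graft]
  obtain rfl : i = j := (hh.update_graft hx j q).1.eq_of_mem (hgh ▸ hmem i p) (hmem j q)
  have hi : graft x p (g i) = graft x q (h i) := by simpa using congrFun hgh i
  have hpq := ungraft_graft hp fun hxg => hxS (hg.leafSet_subset i hxg)
  rw [hi, ungraft_graft hq fun hxh => hxS (hh.leafSet_subset i hxh), Prod.mk.injEq] at hpq
  refine ⟨rfl, funext fun j => ?_, hpq.2.symm⟩
  rcases eq_or_ne j i with rfl | hji
  · exact hpq.1.symm
  · simpa [Function.update_of_ne hji] using congrFun hgh j

lemma IsForest.exists_update_graft_eq (hf : IsForest (insert x S) f) (hx : ∀ y ∈ S, y < x)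
    (hno : ¬∃ i, f i = leaf x) :
    ∃ g i, ∃ p ∈ nodes (g i), IsForest S g ∧ Function.update g i (graft x p (g i)) = f := by
  have hxS : x ∉ S := fun hxS => lt_irrefl x (hx x hxS)
  obtain ⟨i, hxi⟩ := hf.exists_mem (mem_insert_self x S)
  have hle : ∀ y ∈ leafSet (f i), y ≤ x := fun y hy => by
    rcases mem_insert.1 (hf.leafSet_subset i hy) with rfl | hyS
    exacts [le_rfl, (hx y hyS).le]
  obtain ⟨t, p, hp, ht, htc, hxt, hgt⟩ :=
    exists_graft_eq (hf.1 i).1 (hf.1 i).2 hxi hle fun h => hno ⟨i, h⟩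
  refine ⟨Function.update f i t, i, p, by simpa using hp,
    hf.update_erase hxS ⟨ht, htc⟩ (by rw [← hgt, leafSet_graft]) hxt, ?_⟩
  simp [hgt]

lemma card_forest_without_leaf (hx : ∀ y ∈ S, y < x) :
    Nat.card {f : Forest (insert x S) m // ¬∃ i, f.1 i = leaf x} =
      Nat.card (Σ g : Forest S m, Σ i, ↥(nodes (g.1 i))) := by
  let Φ : (Σ g : Forest S m, Σ i, ↥(nodes (g.1 i))) →
      {f : Forest (insert x S) m // ¬∃ i, f.1 i = leaf x} := fun ⟨g, i, p⟩ =>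
    ⟨⟨_, (g.2.update_graft hx i p).1⟩, (g.2.update_graft hx i p).2⟩
  have hΦ : Function.Bijective Φ := by
    constructor
    · rintro ⟨g, i, p⟩ ⟨h, j, q⟩ hgh
      obtain ⟨rfl, hgh', hpq⟩ := g.2.eq_of_update_graft_eq h.2 hx p.2 q.2
        (congrArg (fun f => f.1.1) hgh)
      obtain rfl : g = h := Subtype.ext hgh'
      obtain rfl : p = q := Subtype.ext hpq
      rfl
    · rintro ⟨⟨f, hf⟩, hno⟩
      obtain ⟨g, i, p, hp, hg, rfl⟩ := hf.exists_update_graft_eq hx hno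
      exact ⟨⟨⟨g, hg⟩, i, p, hp⟩, rfl⟩
  exact (Nat.card_eq_of_bijective Φ hΦ).symm

theorem card_forest_insert (hx : ∀ y ∈ S, y < x) :
    Nat.card (Forest (insert x S) (m + 1)) =
      Nat.card (Forest S (m + 1)) * (2 * #S - (m + 1)) + (m + 1) * Nat.card (Forest S m) := by
  classical
  have hxS : x ∉ S := fun hxS => lt_irrefl x (hx x hxS)
  rw [← Nat.card_congr (Equiv.sumCompl fun f : Forest (insert x S) (m + 1) => ∃ i, f.1 i = leaf x),
    Nat.card_sum, card_forest_with_leaf hxS, card_forest_without_leaf hx, card_sigma_nodes,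
    add_comm]

end Insert

lemma card_forest_Icc_succ (N m : ℕ) :
    Nat.card (Forest (Icc 1 (N + 1)) (m + 1)) =
      Nat.card (Forest (Icc 1 N) (m + 1)) * (2 * N - (m + 1)) +
        (m + 1) * Nat.card (Forest (Icc 1 N) m) := by
  rw [← insert_Icc_right_eq_Icc_add_one (by omega), card_forest_insert, Nat.card_Icc,
    Nat.add_sub_cancel]
  exact fun y hy => Nat.lt_succ_of_le (mem_Icc.1 hy).2

lemma card_forest_Icc_self (n : ℕ) : Nat.card (Forest (Icc 1 n) n) = n ! := by
  induction n with
  | zero => exact card_forest_empty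
  | succ N ih =>
    rw [card_forest_Icc_succ, ih, card_forest_of_card_lt (by simp), Nat.factorial_succ]
    ring

theorem card_forest_Icc_mul {n m : ℕ} (hmn : m ≤ n) (hn : 0 < n) :
    Nat.card (Forest (Icc 1 n) m) * ((n - m)! * 2 ^ (n - m)) = (2 * n - m - 1)! * m := by
  induction n generalizing m with
  | zero => omega
  | succ N ih =>
    rcases m with _ | k
    · rw [card_forest_zero ⟨1, by simp⟩, zero_mul, mul_zero]
    rcases Nat.lt_or_ge N (k + 1) with hkN | hkN
    · obtain rfl : k = N := by omega
      rw [card_forest_Icc_self, Nat.sub_self, show 2 * (k + 1) - (k + 1) - 1 = k by omega,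
        Nat.factorial_succ]
      ring
    obtain ⟨e, rfl⟩ : ∃ e, N = k + 1 + e := ⟨N - (k + 1), by omega⟩
    have hA := ih (m := k + 1) (by omega) (by omega)
    rw [show k + 1 + e - (k + 1) = e by omega,
      show 2 * (k + 1 + e) - (k + 1) - 1 = k + 2 * e by omega] at hA
    have hB := ih (m := k) (by omega) (by omega)
    rw [show k + 1 + e - k = e + 1 by omega,
      show 2 * (k + 1 + e) - k - 1 = k + 2 * e + 1 by omega] at hB
    rw [card_forest_Icc_succ, show k + 1 + e + 1 - (k + 1) = e + 1 by omega,
      show 2 * (k + 1 + e + 1) - (k + 1) - 1 = k + 2 * e + 2 by omega,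
      show 2 * (k + 1 + e) - (k + 1) = k + 2 * e + 1 by omega]
    calc (Nat.card (Forest (Icc 1 (k + 1 + e)) (k + 1)) * (k + 2 * e + 1) +
          (k + 1) * Nat.card (Forest (Icc 1 (k + 1 + e)) k)) * ((e + 1)! * 2 ^ (e + 1))
        = 2 * (e + 1) * (k + 2 * e + 1) *
            (Nat.card (Forest (Icc 1 (k + 1 + e)) (k + 1)) * (e ! * 2 ^ e)) +
          (k + 1) * (Nat.card (Forest (Icc 1 (k + 1 + e)) k) * ((e + 1)! * 2 ^ (e + 1))) := by
          rw [Nat.factorial_succ]; ring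
      _ = (k + 2 * e + 2)! * (k + 1) := by
          rw [hA, hB, Nat.factorial_succ (k + 2 * e + 1), Nat.factorial_succ (k + 2 * e)]; ring

end PTree

open PTree in
/-- For all n ≥ m ≥ 1, the number of ordered m-forests on {1,…,n} equals
(2n−m−1)!·m / ((n−m)!·2^(n−m)). -/
theorem numOrderedForests (n m : ℕ) (hm : 1 ≤ m) (hmn : m ≤ n) :
    Nat.card {f : Fin m → PTree //
        (∀ i, isPhylo (f i) ∧ canonical (f i)) ∧
        (∀ i j, i ≠ j → Disjoint (leafSet (f i)) (leafSet (f j))) ∧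
        Finset.univ.biUnion (fun i => leafSet (f i)) = Finset.Icc 1 n} *
      (Nat.factorial (n - m) * 2 ^ (n - m)) =
    Nat.factorial (2 * n - m - 1) * m :=
  card_forest_Icc_mul hmn (by omega)
end

section
/- The expected value of the Colless index of a binary phylogenetic tree with n leaves chosen under the Yule model is E_Y(C_n) = n · ∑_{j=2}^{⌊n/2⌋} 1/j + δ_odd(n), where δ_odd(n) = 1 if n is odd and 0 otherwise. -/
/-!
Cut a canonical tree on `n` leaves at its root. Counting the admissible leaf sets of the first
subtree (those containing the smallest label) against the Yule weights shows that this subtree has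
`a` leaves with probability `2a/(n(n-1))`, `1 ≤ a < n`, and that the two subtrees are independent
Yule trees. So the expected Colless index satisfies
`E n = ∑ₐ 2a/(n(n-1)) (E a + E (n-a) + |2a-n|)`. The summand is symmetric under `a ↦ n - a`, so the
weight `2a` may be replaced by `n`, giving `(n-1) E n = 2 ∑_{a<n} E a + ∑_{a<n} |2a-n|`; the closed
form satisfies this because both sides grow by `2⌊n/2⌋` from `n` to `n+1`.
-/

open Finset

theorem sum_Ico_one_reflect {M : Type*} [AddCommMonoid M] (n : ℕ) (f : ℕ → M) :
    ∑ a ∈ Ico 1 n, f (n - a) = ∑ a ∈ Ico 1 n, f a := by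
  rw [sum_Ico_reflect f 1 n.le_succ, Nat.add_sub_cancel_left, Nat.add_sub_cancel]

theorem sum_Ico_two_mul_mul_of_symm (n : ℕ) {X : ℕ → ℚ} (hX : ∀ a ∈ Ico 1 n, X (n - a) = X a) :
    ∑ a ∈ Ico 1 n, 2 * (a : ℚ) * X a = n * ∑ a ∈ Ico 1 n, X a := by
  have hrefl : ∑ a ∈ Ico 1 n, (a : ℚ) * X a = ∑ a ∈ Ico 1 n, ((n : ℚ) - a) * X a := by
    rw [← sum_Ico_one_reflect n]
    exact sum_congr rfl fun a ha => by rw [hX a ha, Nat.cast_sub (mem_Ico.1 ha).2.le]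
  calc ∑ a ∈ Ico 1 n, 2 * (a : ℚ) * X a
      = ∑ a ∈ Ico 1 n, (a : ℚ) * X a + ∑ a ∈ Ico 1 n, (a : ℚ) * X a := by
        rw [← sum_add_distrib]; exact sum_congr rfl fun a _ => by ring
    _ = ∑ a ∈ Ico 1 n, (a : ℚ) * X a + ∑ a ∈ Ico 1 n, ((n : ℚ) - a) * X a := by rw [← hrefl]
    _ = n * ∑ a ∈ Ico 1 n, X a := by
        rw [← sum_add_distrib, mul_sum]; exact sum_congr rfl fun a _ => by ring

theorem sum_Ico_two_mul_div_eq_one (n : ℕ) (hn : 2 ≤ n) :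
    ∑ a ∈ Ico 1 n, 2 * (a : ℚ) / (n * (n - 1)) = 1 := by
  have h := sum_Ico_two_mul_mul_of_symm n (X := fun _ => 1) fun _ _ => rfl
  simp only [mul_one, sum_const, Nat.card_Ico, nsmul_eq_mul, Nat.cast_sub (by omega : 1 ≤ n),
    Nat.cast_one] at h
  have hn' : (2 : ℚ) ≤ n := by exact_mod_cast hn
  rw [← sum_div, h, div_self (by nlinarith)]

def imbalanceSum (n : ℕ) : ℚ := ∑ a ∈ Ico 1 n, |2 * (a : ℚ) - n|

theorem imbalanceSum_add_two (n : ℕ) : imbalanceSum (n + 2) = imbalanceSum n + 2 * n := by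
  rcases n with _ | n
  · simp [imbalanceSum]
  rw [imbalanceSum, imbalanceSum, sum_Ico_succ_top (by omega), sum_eq_sum_Ico_succ_bot (by omega),
    ← sum_Ico_add']
  have hshift (a : ℕ) :
      |2 * ((a + 1 : ℕ) : ℚ) - (n + 1 + 2 : ℕ)| = |2 * (a : ℚ) - (n + 1 : ℕ)| := by
    push_cast; ring_nf
  simp only [hshift]
  push_cast
  rw [abs_of_nonpos (by linarith), abs_of_nonneg (by linarith)]
  ring

theorem imbalanceSum_succ (n : ℕ) : imbalanceSum (n + 1) = imbalanceSum n + 2 * (n / 2 : ℕ) := by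
  induction n using Nat.twoStepInduction with
  | zero => simp [imbalanceSum]
  | one => norm_num [imbalanceSum]
  | more n ih _ =>
    rw [imbalanceSum_add_two, imbalanceSum_add_two, ih, Nat.add_div_right n two_pos]
    push_cast
    ring

-- The guard makes `collessMean 1 = 0`, the Colless index of a single leaf.
def collessMean (n : ℕ) : ℚ :=
  if n ≤ 1 then 0 else n * ∑ j ∈ Icc 2 (n / 2), (1 : ℚ) / j + if Odd n then 1 else 0

theorem collessMean_two_mul {m : ℕ} (hm : 1 ≤ m) :
    collessMean (2 * m) = 2 * m * ∑ j ∈ Icc 2 m, (1 : ℚ) / j := by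
  rw [collessMean, if_neg (by omega), Nat.mul_div_cancel_left m two_pos,
    if_neg (Nat.not_odd_iff_even.2 (even_two_mul m))]
  push_cast
  ring

theorem collessMean_two_mul_add_one {m : ℕ} (hm : 1 ≤ m) :
    collessMean (2 * m + 1) = (2 * m + 1) * ∑ j ∈ Icc 2 m, (1 : ℚ) / j + 1 := by
  rw [collessMean, if_neg (by omega), show (2 * m + 1) / 2 = m by omega,
    if_pos (odd_two_mul_add_one m)]
  push_cast
  ring

theorem collessMean_succ {n : ℕ} (hn : 2 ≤ n) :
    n * collessMean (n + 1) = (n + 1) * collessMean n + 2 * (n / 2 : ℕ) := by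
  obtain ⟨m, rfl | rfl⟩ := Nat.even_or_odd' n
  · rw [collessMean_two_mul_add_one (by omega), collessMean_two_mul (by omega),
      Nat.mul_div_cancel_left m two_pos]
    push_cast
    ring
  · rw [show 2 * m + 1 + 1 = 2 * (m + 1) by ring, collessMean_two_mul (by omega),
      collessMean_two_mul_add_one (by omega), show (2 * m + 1) / 2 = m by omega,
      sum_Icc_succ_top (by omega)]
    push_cast
    field_simp
    ring

theorem sub_one_mul_collessMean {n : ℕ} (hn : 2 ≤ n) :
    (n - 1) * collessMean n = 2 * ∑ a ∈ Ico 1 n, collessMean a + imbalanceSum n := by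
  induction n, hn using Nat.le_induction with
  | base => norm_num [collessMean, imbalanceSum]
  | succ n hn ih =>
    rw [sum_Ico_succ_top (by omega), imbalanceSum_succ]
    push_cast
    linear_combination ih + collessMean_succ hn

theorem collessMean_eq_sum_Ico {n : ℕ} (hn : 2 ≤ n) :
    ∑ a ∈ Ico 1 n, 2 * (a : ℚ) / (n * (n - 1)) *
      (collessMean a + collessMean (n - a) + |2 * (a : ℚ) - n|) = collessMean n := by
  set X : ℕ → ℚ := fun a => collessMean a + collessMean (n - a) + |2 * (a : ℚ) - n|
  have hX : ∀ a ∈ Ico 1 n, X (n - a) = X a := by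
    intro a ha
    have han := (mem_Ico.1 ha).2.le
    simp only [X, Nat.sub_sub_self han, Nat.cast_sub han]
    rw [add_comm (collessMean (n - a)), ← abs_neg]
    ring_nf
  have hsum : ∑ a ∈ Ico 1 n, X a = (n - 1) * collessMean n := by
    rw [sub_one_mul_collessMean hn, sum_add_distrib, sum_add_distrib,
      sum_Ico_one_reflect n collessMean, imbalanceSum]
    ring
  have hn' : (2 : ℚ) ≤ n := by exact_mod_cast hn
  calc ∑ a ∈ Ico 1 n, 2 * (a : ℚ) / (n * (n - 1)) * X a
      = (∑ a ∈ Ico 1 n, 2 * (a : ℚ) * X a) / (n * (n - 1)) := by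
        rw [sum_div]; exact sum_congr rfl fun a _ => by ring
    _ = collessMean n := by
        have : (n : ℚ) - 1 ≠ 0 := by linarith
        rw [sum_Ico_two_mul_mul_of_symm n hX, hsum]
        field_simp

namespace PTree

deriving instance DecidableEq for PTree

theorem leafSet_nonempty_s7 (t : PTree) : t.leafSet.Nonempty := by
  induction t with
  | leaf x => exact singleton_nonempty x
  | node l r ihl _ => exact ihl.mono subset_union_left

theorem card_leafSet_s7 {t : PTree} (h : t.isPhylo) : #t.leafSet = t.numLeaves := by
  induction t with
  | leaf x => rfl
  | node l r ihl ihr =>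
    obtain ⟨hl, hr, hd⟩ := h
    simp only [leafSet, numLeaves, card_union_of_disjoint hd, ihl hl, ihr hr]

def splits (S : Finset ℕ) : Finset (Finset ℕ) :=
  S.powerset.filter fun A => A.min < (S \ A).min ∧ (S \ A).Nonempty

theorem mem_splits {S A : Finset ℕ} :
    A ∈ splits S ↔ A ⊆ S ∧ A.min < (S \ A).min ∧ (S \ A).Nonempty := by
  rw [splits, mem_filter, mem_powerset]

theorem nonempty_of_mem_splits {S A : Finset ℕ} (h : A ∈ splits S) : A.Nonempty := by
  rw [nonempty_iff_ne_empty]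
  rintro rfl
  simp [mem_splits] at h

theorem ssubset_of_mem_splits {S A : Finset ℕ} (h : A ∈ splits S) : A ⊂ S ∧ S \ A ⊂ S := by
  obtain ⟨hAS, -, hne⟩ := mem_splits.1 h
  refine ⟨Finset.ssubset_iff_subset_ne.2 ⟨hAS, ?_⟩, sdiff_ssubset hAS (nonempty_of_mem_splits h)⟩
  rintro rfl
  simp at hne

theorem card_lt_of_mem_splits {S A : Finset ℕ} (h : A ∈ splits S) : #A < #S ∧ #(S \ A) < #S :=
  ⟨card_lt_card (ssubset_of_mem_splits h).1, card_lt_card (ssubset_of_mem_splits h).2⟩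

theorem splits_singleton (x : ℕ) : splits {x} = ∅ := by
  ext A
  simp only [mem_splits, subset_singleton_iff, notMem_empty, iff_false]
  rintro ⟨rfl | rfl, hlt, hne⟩ <;> simp_all

def treesOn (S : Finset ℕ) : Finset PTree :=
  (if #S = 1 then S.image leaf else ∅) ∪
    (splits S).attach.biUnion fun A =>
      (treesOn A.1 ×ˢ treesOn (S \ A.1)).image fun p => node p.1 p.2
termination_by #S
decreasing_by
  · exact (card_lt_of_mem_splits A.2).1
  · exact (card_lt_of_mem_splits A.2).2

theorem isTreeOn_node_iff {S : Finset ℕ} {l r : PTree} :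
    isTreeOn S (node l r) ↔ ∃ A ∈ splits S, isTreeOn A l ∧ isTreeOn (S \ A) r := by
  constructor
  · rintro ⟨⟨pl, pr, hd⟩, ⟨cl, cr, hlt⟩, hS⟩
    have hr : S \ l.leafSet = r.leafSet := by
      rw [← hS, leafSet, union_sdiff_left, sdiff_eq_self_of_disjoint hd.symm]
    refine ⟨l.leafSet, mem_splits.2 ⟨?_, ?_, ?_⟩, ⟨pl, cl, rfl⟩, pr, cr, hr.symm⟩
    · exact hS ▸ subset_union_left
    · rwa [hr]
    · exact hr ▸ leafSet_nonempty_s7 r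
  · rintro ⟨A, hA, ⟨pl, cl, rfl⟩, pr, cr, hr⟩
    obtain ⟨hAS, hlt, -⟩ := mem_splits.1 hA
    refine ⟨⟨pl, pr, hr ▸ disjoint_sdiff⟩, ⟨cl, cr, hr ▸ hlt⟩, ?_⟩
    rw [leafSet, hr, union_sdiff_of_subset hAS]

theorem mem_treesOn {S : Finset ℕ} {t : PTree} : t ∈ treesOn S ↔ isTreeOn S t := by
  induction t generalizing S with
  | leaf x =>
    rw [treesOn]
    split_ifs with h
    · obtain ⟨y, rfl⟩ := card_eq_one.1 h
      simp [isTreeOn, isPhylo, canonical, leafSet, eq_comm]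
    · simp only [isTreeOn, leafSet, empty_union, mem_biUnion, mem_image, reduceCtorEq, and_false,
        exists_false, false_iff, not_and]
      rintro - - rfl
      exact h (card_singleton x)
  | node l r ihl ihr =>
    rw [treesOn, isTreeOn_node_iff]
    split_ifs <;> simp [ihl, ihr, and_left_comm]

theorem numLeaves_of_mem_treesOn {S : Finset ℕ} {t : PTree} (h : t ∈ treesOn S) :
    t.numLeaves = #S := by
  obtain ⟨hp, -, rfl⟩ := mem_treesOn.1 h
  exact (card_leafSet_s7 hp).symm

theorem treesOn_singleton (x : ℕ) : treesOn {x} = {leaf x} := by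
  rw [treesOn, splits_singleton]
  simp

theorem sum_treesOn {M : Type*} [AddCommMonoid M] {S : Finset ℕ} (hS : #S ≠ 1) (f : PTree → M) :
    ∑ t ∈ treesOn S, f t =
      ∑ A ∈ splits S, ∑ l ∈ treesOn A, ∑ r ∈ treesOn (S \ A), f (node l r) := by
  rw [treesOn, if_neg hS, empty_union, sum_biUnion, ← sum_attach (splits S)]
  · refine sum_congr rfl fun A _ => ?_
    rw [sum_image fun p _ q _ h => by simpa [Prod.ext_iff] using h, sum_product]
  · rintro A - B - hAB
    refine disjoint_left.2 fun t htA htB => hAB (Subtype.ext ?_)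
    obtain ⟨⟨l, r⟩, hlr, rfl⟩ := mem_image.1 htA
    obtain ⟨⟨l', r'⟩, hlr', h⟩ := mem_image.1 htB
    obtain ⟨rfl, -⟩ := node.inj h
    rw [← (mem_treesOn.1 (mem_product.1 hlr).1).2.2, ← (mem_treesOn.1 (mem_product.1 hlr').1).2.2]

theorem min_lt_min_sdiff_iff {S A : Finset ℕ} (hS : S.Nonempty) (hAS : A ⊆ S)
    (hne : (S \ A).Nonempty) : A.min < (S \ A).min ↔ S.min' hS ∈ A := by
  rcases A.eq_empty_or_nonempty with rfl | hA
  · simp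
  have hdiff := mem_sdiff.1 (min'_mem _ hne)
  rw [← coe_min' hA, ← coe_min' hne, WithTop.coe_lt_coe]
  constructor
  · intro h
    by_contra hm
    have := min'_le _ _ (mem_sdiff.2 ⟨min'_mem S hS, hm⟩)
    have := min'_le S _ (hAS (min'_mem A hA))
    omega
  · intro hm
    refine (min'_le A _ hm).trans_lt (lt_of_le_of_ne (min'_le S _ hdiff.1) ?_)
    intro h
    exact hdiff.2 (h ▸ hm)

theorem card_filter_splits {S : Finset ℕ} {a : ℕ} (ha : a ∈ Ico 1 #S) :
    #{A ∈ splits S | #A = a} = (#S - 1).choose (a - 1) := by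
  obtain ⟨ha1, haS⟩ := mem_Ico.1 ha
  have hS : S.Nonempty := card_pos.1 (by omega)
  set m := S.min' hS
  have hmS : m ∈ S := min'_mem S hS
  rw [← card_erase_of_mem hmS, ← card_powersetCard]
  refine card_nbij' (fun A => A.erase m) (insert m) ?_ ?_ ?_ ?_
  · intro A hA
    obtain ⟨hsplit, rfl⟩ := mem_filter.1 (mem_coe.1 hA)
    obtain ⟨hAS, hlt, hne⟩ := mem_splits.1 hsplit
    have hmA := (min_lt_min_sdiff_iff hS hAS hne).1 hlt
    exact mem_powersetCard.2 ⟨erase_subset_erase m hAS, card_erase_of_mem hmA⟩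
  · intro B hB
    obtain ⟨hBS, hBa⟩ := mem_powersetCard.1 (mem_coe.1 hB)
    have hmB : m ∉ B := fun h => notMem_erase m S (hBS h)
    have hsub : insert m B ⊆ S := insert_subset hmS (hBS.trans (erase_subset m S))
    have hcard : #(insert m B) = #B + 1 := card_insert_of_notMem hmB
    have hne : (S \ insert m B).Nonempty := by
      rw [← card_pos, card_sdiff_of_subset hsub]
      omega
    refine mem_filter.2 ⟨mem_splits.2 ⟨hsub, ?_, hne⟩, by omega⟩
    exact (min_lt_min_sdiff_iff hS hsub hne).2 (mem_insert_self m B)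
  · intro A hA
    obtain ⟨hA, -⟩ := mem_filter.1 (mem_coe.1 hA)
    obtain ⟨hAS, hlt, hne⟩ := mem_splits.1 hA
    exact insert_erase ((min_lt_min_sdiff_iff hS hAS hne).1 hlt)
  · intro B hB
    exact erase_insert fun h => notMem_erase m S ((mem_powersetCard.1 (mem_coe.1 hB)).1 h)

theorem sum_splits_eq_sum_card {M : Type*} [AddCommMonoid M] (S : Finset ℕ) (g : ℕ → M) :
    ∑ A ∈ splits S, g #A = ∑ a ∈ Ico 1 #S, (#S - 1).choose (a - 1) • g a := by
  have hmaps (A) (hA : A ∈ splits S) : #A ∈ Ico 1 #S :=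
    mem_Ico.2 ⟨card_pos.2 (nonempty_of_mem_splits hA), (card_lt_of_mem_splits hA).1⟩
  rw [← sum_fiberwise_of_maps_to hmaps]
  refine sum_congr rfl fun a ha => ?_
  rw [sum_congr rfl fun A hA => by rw [(mem_filter.1 hA).2], sum_const, card_filter_splits ha]

def yuleSplitFactor (a b : ℕ) : ℚ :=
  2 * a.factorial * b.factorial / ((a + b).factorial * ((a : ℚ) + b - 1))

theorem numLeaves_pos (t : PTree) : 0 < t.numLeaves := by
  induction t with
  | leaf => exact Nat.one_pos
  | node l r ihl _ => exact Nat.add_pos_left ihl _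

theorem yule_leaf (x : ℕ) : yule (leaf x) = 1 := by
  simp [yule, yuleProd, numLeaves]

theorem yule_node (l r : PTree) :
    yule (node l r) = yuleSplitFactor l.numLeaves r.numLeaves * yule l * yule r := by
  obtain ⟨a, ha⟩ := Nat.exists_eq_add_one.2 (numLeaves_pos l)
  obtain ⟨b, hb⟩ := Nat.exists_eq_add_one.2 (numLeaves_pos r)
  simp only [yule, yuleProd, numLeaves, yuleSplitFactor, ha, hb,
    show a + 1 + (b + 1) - 1 = a + b + 1 by omega, Nat.add_sub_cancel, pow_succ, pow_add]
  push_cast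
  field_simp

theorem choose_mul_yuleSplitFactor {n a : ℕ} (ha : a ∈ Ico 1 n) :
    (n - 1).choose (a - 1) * yuleSplitFactor a (n - a) = 2 * (a : ℚ) / (n * (n - 1)) := by
  obtain ⟨h1, h2⟩ := mem_Ico.1 ha
  obtain ⟨i, rfl⟩ : ∃ i, a = i + 1 := ⟨a - 1, by omega⟩
  obtain ⟨j, rfl⟩ : ∃ j, n = i + (j + 1) + 1 := ⟨n - i - 2, by omega⟩
  have hchoose := Nat.add_choose_mul_factorial_mul_factorial i (j + 1)
  rw [← Nat.choose_symm_add] at hchoose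
  have hpos : ((i + (j + 1)).choose i : ℚ) ≠ 0 := by exact_mod_cast (Nat.choose_pos (by omega)).ne'
  rw [show i + (j + 1) + 1 - 1 = i + (j + 1) by omega, Nat.add_sub_cancel,
    show i + (j + 1) + 1 - (i + 1) = j + 1 by omega, yuleSplitFactor,
    show i + 1 + (j + 1) = i + (j + 1) + 1 by omega, Nat.factorial_succ (i + (j + 1)),
    Nat.factorial_succ i, ← hchoose]
  push_cast
  field_simp
  ring

theorem sum_treesOn_mul_yule {S : Finset ℕ} (hS : #S ≠ 1) (f : PTree → ℚ) (G : ℕ → ℚ)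
    (hG : ∀ A ∈ splits S,
      ∑ l ∈ treesOn A, ∑ r ∈ treesOn (S \ A), f (node l r) * (yule l * yule r) = G #A) :
    ∑ t ∈ treesOn S, f t * yule t = ∑ a ∈ Ico 1 #S, 2 * (a : ℚ) / (#S * (#S - 1)) * G a := by
  calc ∑ t ∈ treesOn S, f t * yule t
      = ∑ A ∈ splits S, yuleSplitFactor #A (#S - #A) * G #A := by
        rw [sum_treesOn hS]
        refine sum_congr rfl fun A hA => ?_
        rw [← hG A hA, mul_sum]
        refine sum_congr rfl fun l hl => ?_
        rw [mul_sum]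
        refine sum_congr rfl fun r hr => ?_
        rw [yule_node, numLeaves_of_mem_treesOn hl, numLeaves_of_mem_treesOn hr,
          card_sdiff_of_subset (mem_splits.1 hA).1]
        ring
    _ = ∑ a ∈ Ico 1 #S, (#S - 1).choose (a - 1) • (yuleSplitFactor a (#S - a) * G a) :=
        sum_splits_eq_sum_card S fun a => yuleSplitFactor a (#S - a) * G a
    _ = ∑ a ∈ Ico 1 #S, 2 * (a : ℚ) / (#S * (#S - 1)) * G a :=
        sum_congr rfl fun a ha => by rw [nsmul_eq_mul, ← mul_assoc, choose_mul_yuleSplitFactor ha]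

theorem sum_yule_treesOn {S : Finset ℕ} (hS : S.Nonempty) : ∑ t ∈ treesOn S, yule t = 1 := by
  induction S using Finset.strongInduction with
  | H S ih =>
    by_cases h1 : #S = 1
    · obtain ⟨x, rfl⟩ := card_eq_one.1 h1
      simp [treesOn_singleton, yule_leaf]
    have hG : ∀ A ∈ splits S,
        ∑ l ∈ treesOn A, ∑ r ∈ treesOn (S \ A), 1 * (yule l * yule r) = 1 := by
      intro A hA
      obtain ⟨hAS, hSA⟩ := ssubset_of_mem_splits hA
      simp only [one_mul, ← sum_mul_sum, ih A hAS (nonempty_of_mem_splits hA),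
        ih (S \ A) hSA (mem_splits.1 hA).2.2, mul_one]
    have h2 : 2 ≤ #S := by have := card_pos.2 hS; omega
    calc ∑ t ∈ treesOn S, yule t = ∑ t ∈ treesOn S, 1 * yule t := by simp only [one_mul]
      _ = ∑ a ∈ Ico 1 #S, 2 * (a : ℚ) / (#S * (#S - 1)) * 1 := sum_treesOn_mul_yule h1 _ _ hG
      _ = 1 := by simpa only [mul_one] using sum_Ico_two_mul_div_eq_one #S h2

theorem cast_colless_node (l r : PTree) :
    (colless (node l r) : ℚ) = colless l + colless r + |(l.numLeaves : ℚ) - r.numLeaves| := by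
  simp [colless, Nat.cast_natAbs]

theorem sum_colless_mul_yule_treesOn {S : Finset ℕ} (hS : S.Nonempty) :
    ∑ t ∈ treesOn S, (colless t : ℚ) * yule t = collessMean #S := by
  induction S using Finset.strongInduction with
  | H S ih =>
    by_cases h1 : #S = 1
    · obtain ⟨x, rfl⟩ := card_eq_one.1 h1
      simp [treesOn_singleton, colless, collessMean]
    have hG : ∀ A ∈ splits S,
        ∑ l ∈ treesOn A, ∑ r ∈ treesOn (S \ A), (colless (node l r) : ℚ) * (yule l * yule r) =
          collessMean #A + collessMean (#S - #A) + |2 * (#A : ℚ) - #S| := by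
      intro A hA
      obtain ⟨hAS, hSA⟩ := ssubset_of_mem_splits hA
      have hA₀ := nonempty_of_mem_splits hA
      have hSA₀ := (mem_splits.1 hA).2.2
      have hcard : #(S \ A) = #S - #A := card_sdiff_of_subset hAS.subset
      have hgap : |(#A : ℚ) - #(S \ A)| = |2 * (#A : ℚ) - #S| := by
        rw [hcard, Nat.cast_sub (card_le_card hAS.subset)]
        ring_nf
      calc ∑ l ∈ treesOn A, ∑ r ∈ treesOn (S \ A), (colless (node l r) : ℚ) * (yule l * yule r)
          = ∑ l ∈ treesOn A, ∑ r ∈ treesOn (S \ A), ((colless l * yule l) * yule r +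
              yule l * (colless r * yule r) + |2 * (#A : ℚ) - #S| * (yule l * yule r)) := by
            refine sum_congr rfl fun l hl => sum_congr rfl fun r hr => ?_
            rw [cast_colless_node, numLeaves_of_mem_treesOn hl, numLeaves_of_mem_treesOn hr, hgap]
            ring
        _ = (∑ l ∈ treesOn A, colless l * yule l) * (∑ r ∈ treesOn (S \ A), yule r) +
              (∑ l ∈ treesOn A, yule l) * (∑ r ∈ treesOn (S \ A), colless r * yule r) +
              |2 * (#A : ℚ) - #S| *
                ((∑ l ∈ treesOn A, yule l) * (∑ r ∈ treesOn (S \ A), yule r)) := by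
            rw [sum_mul_sum, sum_mul_sum, sum_mul_sum]
            simp only [mul_sum, sum_add_distrib]
        _ = collessMean #A + collessMean (#S - #A) + |2 * (#A : ℚ) - #S| := by
            rw [sum_yule_treesOn hA₀, sum_yule_treesOn hSA₀, ih A hAS hA₀, ih _ hSA hSA₀, hcard]
            ring
    have h2 : 2 ≤ #S := by have := card_pos.2 hS; omega
    rw [sum_treesOn_mul_yule h1 _
      (fun a => collessMean a + collessMean (#S - a) + |2 * (a : ℚ) - #S|) hG,
      collessMean_eq_sum_Ico h2]

theorem finsum_isTreeOn_eq_sum_treesOn (S : Finset ℕ) (f : PTree → ℚ) :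
    ∑ᶠ t : {t : PTree // isTreeOn S t}, f t.1 = ∑ t ∈ treesOn S, f t := by
  have hset : {t | isTreeOn S t} = ↑(treesOn S) := Set.ext fun _ => mem_treesOn.symm
  calc ∑ᶠ t : {t : PTree // isTreeOn S t}, f t.1 = ∑ᶠ t ∈ {t | isTreeOn S t}, f t :=
        finsum_set_coe_eq_finsum_mem _
    _ = ∑ t ∈ treesOn S, f t := by rw [hset, finsum_mem_coe_finset]

end PTree

open PTree in
/-- The expected value of the Colless index under the Yule model is
n·∑_{j=2}^{⌊n/2⌋} 1/j + δ_odd(n). -/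
theorem expected_colless_yule (n : ℕ) (hn : 2 ≤ n) :
    (∑ᶠ t : {t : PTree // isTreeOn (Finset.Icc 1 n) t}, (colless t.1 : ℚ) * yule t.1) =
      (n : ℚ) * ∑ j ∈ Finset.Icc 2 (n / 2), (1 : ℚ) / j +
        (if Odd n then 1 else 0) := by
  have hne : (Icc 1 n).Nonempty := nonempty_Icc.2 (by omega)
  rw [finsum_isTreeOn_eq_sum_treesOn _ fun t => (colless t : ℚ) * yule t,
    sum_colless_mul_yule_treesOn hne, Nat.card_Icc, Nat.add_sub_cancel, collessMean,
    if_neg (by omega)]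
end
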